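/- Let α ∈ {0, 1, −1}. For each integer n define the vector field on ℝ³ (coordinates (t,x,u)): L_n = e^{-nt} ∂_t + e^{-nt} [ n + (α n(n−1)/2) e^{-x} ] ∂_x + (n(n−1)/2) e^{-nt−x} ∂_u. Then for all integers m, n one has [L_m, L_n] = (m − n) L_{m+n}. (Realization 𝔚₁₁ of the Witt algebra from Theorem 1.) -/
import Mathlib


noncomputable section

/-- Partial derivative of `f : ℝ³ → ℝ` (curried) in the first variable `t`. -/
def pt (f : ℝ → ℝ → ℝ → ℝ) (t x u : ℝ) : ℝ := deriv (fun s => f s x u) t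

/-- Partial derivative in the second variable `x`. -/
def px (f : ℝ → ℝ → ℝ → ℝ) (t x u : ℝ) : ℝ := deriv (fun s => f t s u) x

/-- Partial derivative in the third variable `u`. -/
def pu (f : ℝ → ℝ → ℝ → ℝ) (t x u : ℝ) : ℝ := deriv (fun s => f t x s) u

/-- A vector field `τ ∂_t + ξ ∂_x + η ∂_u` on ℝ³ with coordinates `(t,x,u)`. -/
structure VF3 where
  tau : ℝ → ℝ → ℝ → ℝ
  xi  : ℝ → ℝ → ℝ → ℝ
  eta : ℝ → ℝ → ℝ → ℝ

/-- Action of a vector field on a function: `X(F) = τ F_t + ξ F_x + η F_u`. -/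
def VF3.app (X : VF3) (F : ℝ → ℝ → ℝ → ℝ) (t x u : ℝ) : ℝ :=
  X.tau t x u * pt F t x u + X.xi t x u * px F t x u + X.eta t x u * pu F t x u

/-- Lie bracket of vector fields on ℝ³. -/
def VF3.bracket (X Y : VF3) : VF3 where
  tau := fun t x u => X.app Y.tau t x u - Y.app X.tau t x u
  xi  := fun t x u => X.app Y.xi t x u - Y.app X.xi t x u
  eta := fun t x u => X.app Y.eta t x u - Y.app X.eta t x u

/-- Scalar multiple of a vector field. -/
def VF3.smul (c : ℝ) (X : VF3) : VF3 where
  tau := fun t x u => c * X.tau t x u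
  xi  := fun t x u => c * X.xi t x u
  eta := fun t x u => c * X.eta t x u

/-- Smoothness of a coefficient function on ℝ³. -/
def Smooth3 (f : ℝ → ℝ → ℝ → ℝ) : Prop :=
  ContDiff ℝ (⊤ : ℕ∞) fun p : ℝ × ℝ × ℝ => f p.1 p.2.1 p.2.2

/-- The vector fields of the realization 𝔚₁₁:
`L n = e^{-nt} ∂_t + e^{-nt}[n + (α n(n-1)/2) e^{-x}] ∂_x + (n(n-1)/2) e^{-nt-x} ∂_u`. -/
def W11 (α : ℝ) (n : ℤ) : VF3 where
  tau := fun t _ _ => Real.exp (-(n : ℝ) * t)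
  xi  := fun t x _ => Real.exp (-(n : ℝ) * t) *
    ((n : ℝ) + α * (n : ℝ) * ((n : ℝ) - 1) / 2 * Real.exp (-x))
  eta := fun t x _ => (n : ℝ) * ((n : ℝ) - 1) / 2 * Real.exp (-(n : ℝ) * t - x)


lemma dexp_mul (a y : ℝ) : deriv (fun s : ℝ => Real.exp (a * s)) y = a * Real.exp (a * y) :=
  (by simpa [mul_comm] using (((hasDerivAt_id y).const_mul a).exp) :
    HasDerivAt _ (a * Real.exp (a * y)) y).deriv

lemma dexp_mul_const (a c y : ℝ) :
    deriv (fun s : ℝ => Real.exp (a * s) * c) y = a * Real.exp (a * y) * c :=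
  (by simpa [mul_comm, mul_assoc, mul_left_comm] using
    ((((hasDerivAt_id y).const_mul a).exp).mul_const c) :
    HasDerivAt _ (a * Real.exp (a * y) * c) y).deriv

lemma dmul_exp_sub (c a b y : ℝ) :
    deriv (fun s : ℝ => c * Real.exp (a * s - b)) y = c * (a * Real.exp (a * y - b)) :=
  (by simpa [mul_comm, mul_assoc, mul_left_comm] using
    (((((hasDerivAt_id y).const_mul a).sub_const b).exp).const_mul c) :
    HasDerivAt _ (c * (a * Real.exp (a * y - b))) y).deriv

lemma dmul_exp_subr (c b y : ℝ) :
    deriv (fun s : ℝ => c * Real.exp (b - s)) y = -(c * Real.exp (b - y)) :=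
  (by simpa [mul_comm, mul_assoc, mul_left_comm] using
    ((((hasDerivAt_id y).const_sub b).exp).const_mul c) :
    HasDerivAt _ (-(c * Real.exp (b - y))) y).deriv

lemma dmul_add_exp_neg (c b k y : ℝ) :
    deriv (fun s : ℝ => c * (b + k * Real.exp (-s))) y = c * (k * (-Real.exp (-y))) :=
  (by simpa [mul_comm, mul_assoc, mul_left_comm] using
    (((((hasDerivAt_neg y).exp).const_mul k).const_add b).const_mul c) :
    HasDerivAt _ (c * (k * (-Real.exp (-y)))) y).deriv

/-- Realization 𝔚₁₁ of the Witt algebra: `[L m, L n] = (m - n) L (m + n)`. -/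
theorem witt_realization_W11 (α : ℝ) (hα : α = 0 ∨ α = 1 ∨ α = -1) (m n : ℤ) :
    VF3.bracket (W11 α m) (W11 α n) = VF3.smul ((m : ℝ) - (n : ℝ)) (W11 α (m + n)) := by
  have hmk : ∀ X Y : VF3, X.tau = Y.tau → X.xi = Y.xi → X.eta = Y.eta → X = Y := by
    rintro ⟨_,_,_⟩ ⟨_,_,_⟩ rfl rfl rfl; rfl
  apply hmk <;> funext t x u <;>
      simp only [VF3.bracket, VF3.smul, VF3.app, W11, pt, px, pu] <;>
    · simp only [deriv_const', dexp_mul, dexp_mul_const, dmul_exp_sub, dmul_exp_subr,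
        dmul_add_exp_neg]
      push_cast
      simp only [neg_add, add_mul, sub_eq_add_neg, Real.exp_add, neg_mul]
      ring
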